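/- arXiv:1605.03758 — 4 statements merged into one kernel-verified Lean document; each statement's English description precedes it below -/
import Mathlib

section
/- Let G be a countable directed graph. There is a bijective correspondence between path weights α: G⁺ → (0,∞) (strictly positive functions with α(x) = 1 for every vertex x) and left weights λ on G, given by λ_α(v,w) = α(wv)/α(v) if wv ∈ G⁺ and λ_α(v,w) = 0 otherwise, with inverse λ ↦ α_λ where α_λ(v) = λ(s(v), v). That is, λ_{α_λ} = λ and α_{λ_α} = α for all left weights λ and path weights α. -/
open scoped Classical

noncomputable section

/-- The set of all finite paths of a directed graph (quiver), including
vertices as paths of length `0`. -/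
def PathIn (V : Type u) [Quiver.{w + 1} V] : Type (max u (w + 1)) :=
  Σ a b : V, Quiver.Path a b

namespace PathIn

variable {V : Type u} [Quiver.{w + 1} V]

/-- The source vertex `s(p)` of a path. -/
def src (p : PathIn V) : V := p.1

/-- The range vertex `r(p)` of a path. -/
def tgt (p : PathIn V) : V := p.2.1

/-- The length `|p|` of a path. -/
def length (p : PathIn V) : ℕ := p.2.2.length

/-- A vertex, regarded as a path of length `0`. -/
def ofVertex (x : V) : PathIn V := ⟨x, x, Quiver.Path.nil⟩

/-- A path which is a single edge. -/
def IsEdge (p : PathIn V) : Prop := p.length = 1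

/-- `Comp w v`: the product `wv` (first traverse `v`, then `w`) is a path,
i.e. `s(w) = r(v)`. -/
def Comp (w v : PathIn V) : Prop := w.src = v.tgt

/-- The product path `wv` (first traverse `v`, then `w`); junk value `w` if
not composable. -/
def mul (w v : PathIn V) : PathIn V :=
  if h : w.src = v.tgt then ⟨v.1, w.2.1, v.2.2.comp (w.2.2.cast h rfl)⟩ else w

end PathIn

variable {V : Type u} [Quiver.{w + 1} V]

/-- A left weight on the path semigroupoid of `G`: nonnegative, nonzero
exactly on composable pairs, and satisfying the left cocycle condition. -/
def IsLeftWeight (l : PathIn V → PathIn V → ℝ) : Prop :=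
  (∀ v w, 0 ≤ l v w) ∧
  (∀ v w, 0 < l v w ↔ PathIn.Comp w v) ∧
  (∀ v w₁ w₂, PathIn.Comp w₁ v → PathIn.Comp w₂ w₁ →
    l v (PathIn.mul w₂ w₁) = l (PathIn.mul w₁ v) w₂ * l v w₁)

/-- A right weight on the path semigroupoid of `G`. -/
def IsRightWeight (r : PathIn V → PathIn V → ℝ) : Prop :=
  (∀ v u, 0 ≤ r v u) ∧
  (∀ v u, 0 < r v u ↔ PathIn.Comp v u) ∧
  (∀ v u₁ u₂, PathIn.Comp v u₁ → PathIn.Comp u₁ u₂ →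
    r v (PathIn.mul u₁ u₂) = r (PathIn.mul v u₁) u₂ * r v u₁)

/-- A path weight: strictly positive, equal to `1` on vertices. -/
def IsPathWeight (α : PathIn V → ℝ) : Prop :=
  (∀ p, 0 < α p) ∧ (∀ x : V, α (PathIn.ofVertex x) = 1)

/-- The left weight `λ_α` associated with a path weight `α`. -/
def leftOf (α : PathIn V → ℝ) (v w : PathIn V) : ℝ :=
  if PathIn.Comp w v then α (PathIn.mul w v) / α v else 0

/-- The right weight `ρ_α` associated with a path weight `α`. -/
def rightOf (α : PathIn V → ℝ) (v u : PathIn V) : ℝ :=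
  if PathIn.Comp v u then α (PathIn.mul v u) / α v else 0

/-- The path weight `α_λ` associated with a left weight: `α_λ(v) = λ(s(v),v)`. -/
def pwOf (l : PathIn V → PathIn V → ℝ) (v : PathIn V) : ℝ :=
  l (PathIn.ofVertex v.src) v

/-- `λ` is left-bounded at `w`, i.e. `λ(w) = sup_v λ(v,w) < ∞`. -/
def LeftBddAt (l : PathIn V → PathIn V → ℝ) (w : PathIn V) : Prop :=
  BddAbove (Set.range fun v => l v w)

/-- `λ` is left-bounded. -/
def LeftBdd (l : PathIn V → PathIn V → ℝ) : Prop := ∀ w, LeftBddAt l w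

/-- `ρ` is right-bounded at `u`, i.e. `ρ(u) = sup_v ρ(v,u) < ∞`. -/
def RightBddAt (r : PathIn V → PathIn V → ℝ) (u : PathIn V) : Prop :=
  BddAbove (Set.range fun v => r v u)

/-- `ρ` is right-bounded. -/
def RightBdd (r : PathIn V → PathIn V → ℝ) : Prop := ∀ u, RightBddAt r u

/-- `ρ` is a right companion to `λ`: it is a right weight and the pair
`(λ, ρ)` satisfies the commuting square condition at every `(w, u)`. -/
def IsRightCompanion (l r : PathIn V → PathIn V → ℝ) : Prop :=
  IsRightWeight r ∧
  ∀ w u v, PathIn.Comp w v → PathIn.Comp v u →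
    r (PathIn.mul w v) u * l v w = l (PathIn.mul v u) w * r v u

/-- The Fock space `H_G = ℓ²(G⁺)` of the graph. -/
abbrev FockSpace (V : Type u) [Quiver.{w + 1} V] : Type _ := lp (fun _ : PathIn V => ℂ) 2

/-- The canonical orthonormal basis vector `ξ_v` of the Fock space. -/
def xi (v : PathIn V) : FockSpace V := lp.single 2 v 1

end


section Aux
variable {V : Type u} [Quiver.{w + 1} V]

lemma PathIn.mul_def {w v : PathIn V} (h : PathIn.Comp w v) :
    PathIn.mul w v = ⟨v.1, w.2.1, v.2.2.comp (w.2.2.cast h rfl)⟩ := dif_pos h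

lemma PathIn.src_mul {w v : PathIn V} (h : PathIn.Comp w v) :
    (PathIn.mul w v).src = v.src := by rw [PathIn.mul_def h]; rfl

lemma PathIn.tgt_mul {w v : PathIn V} (h : PathIn.Comp w v) :
    (PathIn.mul w v).tgt = w.tgt := by rw [PathIn.mul_def h]; rfl

lemma PathIn.mul_ofVertex (w : PathIn V) :
    PathIn.mul w (PathIn.ofVertex w.src) = w := by
  obtain ⟨a, b, p⟩ := w
  simp [PathIn.mul, PathIn.ofVertex, PathIn.src, PathIn.tgt, Quiver.Path.cast_rfl_rfl]
  rfl

lemma PathIn.ofVertex_mul (v : PathIn V) :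
    PathIn.mul (PathIn.ofVertex v.tgt) v = v := by
  obtain ⟨a, b, p⟩ := v
  simp [PathIn.mul, PathIn.ofVertex, PathIn.src, PathIn.tgt, Quiver.Path.cast_rfl_rfl]
  rfl

lemma PathIn.mul_assoc' {v w₁ w₂ : PathIn V} (h1 : PathIn.Comp w₁ v) (h2 : PathIn.Comp w₂ w₁) :
    PathIn.mul (PathIn.mul w₂ w₁) v = PathIn.mul w₂ (PathIn.mul w₁ v) := by
  obtain ⟨a, b, p⟩ := v
  obtain ⟨c, d, q⟩ := w₁
  obtain ⟨e, f, s⟩ := w₂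
  have hc : c = b := h1
  have he : e = d := h2
  subst hc; subst he
  have m1 : PathIn.mul (⟨e, ⟨f, s⟩⟩ : PathIn V) ⟨c, ⟨e, q⟩⟩ = ⟨c, ⟨f, q.comp s⟩⟩ :=
    PathIn.mul_def h2
  have m2 : PathIn.mul (⟨c, ⟨e, q⟩⟩ : PathIn V) ⟨a, ⟨c, p⟩⟩ = ⟨a, ⟨e, p.comp q⟩⟩ :=
    PathIn.mul_def h1
  rw [m1, m2]
  have m3 : PathIn.mul (⟨c, ⟨f, q.comp s⟩⟩ : PathIn V) ⟨a, ⟨c, p⟩⟩ =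
      ⟨a, ⟨f, p.comp (q.comp s)⟩⟩ := PathIn.mul_def (by rfl)
  have m4 : PathIn.mul (⟨e, ⟨f, s⟩⟩ : PathIn V) ⟨a, ⟨e, p.comp q⟩⟩ =
      ⟨a, ⟨f, (p.comp q).comp s⟩⟩ := PathIn.mul_def (by rfl)
  rw [m3, m4, Quiver.Path.comp_assoc]

end Aux

/-- bijective correspondence between path weights and left weights. -/
theorem pathWeight_leftWeight_correspondence {V : Type u} [Quiver.{w + 1} V] [Countable V] [∀ a b : V, Countable (a ⟶ b)] :
    (∀ α : PathIn V → ℝ, IsPathWeight α → IsLeftWeight (leftOf α)) ∧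
    (∀ l : PathIn V → PathIn V → ℝ, IsLeftWeight l → IsPathWeight (pwOf l)) ∧
    (∀ l : PathIn V → PathIn V → ℝ, IsLeftWeight l → leftOf (pwOf l) = l) ∧
    (∀ α : PathIn V → ℝ, IsPathWeight α → pwOf (leftOf α) = α) := by
  refine ⟨?_, ?_, ?_, ?_⟩
  · rintro α ⟨hpos, hvert⟩
    refine ⟨fun v w => ?_, fun v w => ?_, fun v w₁ w₂ h1 h2 => ?_⟩
    · unfold leftOf; split
      · exact div_nonneg (hpos _).le (hpos _).le
      · exact le_refl 0
    · unfold leftOf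
      constructor
      · intro h; by_contra hc; simp [hc] at h
      · intro h; rw [if_pos h]; exact div_pos (hpos _) (hpos _)
    · have hcomp : PathIn.Comp (PathIn.mul w₂ w₁) v := by
        rw [PathIn.Comp, PathIn.src_mul h2]; exact h1
      have hcomp2 : PathIn.Comp w₂ (PathIn.mul w₁ v) := by
        rw [PathIn.Comp, PathIn.tgt_mul h1]; exact h2
      unfold leftOf
      rw [if_pos hcomp, if_pos h1, if_pos hcomp2]
      rw [PathIn.mul_assoc' h1 h2]
      have e1 : α (PathIn.mul w₁ v) ≠ 0 := (hpos _).ne'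
      have e2 : α v ≠ 0 := (hpos _).ne'
      field_simp
  · rintro l ⟨hnn, hiff, hcoc⟩
    have key : ∀ x : V, l (PathIn.ofVertex x) (PathIn.ofVertex x) = 1 := by
      intro x
      set e := PathIn.ofVertex x with he
      have hc : PathIn.Comp e e := rfl
      have := hcoc e e e hc hc
      rw [show PathIn.mul e e = e from PathIn.mul_ofVertex e] at this
      have hp : 0 < l e e := (hiff e e).2 hc
      nlinarith
    refine ⟨fun p => ?_, fun x => ?_⟩
    · exact (hiff _ _).2 rfl
    · exact key x
  · rintro l ⟨hnn, hiff, hcoc⟩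
    funext v w
    by_cases h : PathIn.Comp w v
    · have hc0 : PathIn.Comp v (PathIn.ofVertex v.src) := rfl
      have hkey := hcoc (PathIn.ofVertex v.src) v w hc0 h
      rw [PathIn.mul_ofVertex] at hkey
      unfold leftOf pwOf
      rw [if_pos h, PathIn.src_mul h, hkey]
      have hp : 0 < l (PathIn.ofVertex v.src) v := (hiff _ _).2 hc0
      field_simp
    · unfold leftOf
      rw [if_neg h]
      have h2 : ¬ 0 < l v w := fun hp => h ((hiff v w).1 hp)
      push_neg at h2
      linarith [hnn v w]
  · rintro α ⟨hpos, hvert⟩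
    funext v
    unfold pwOf leftOf
    rw [if_pos (show PathIn.Comp v (PathIn.ofVertex v.src) from rfl), PathIn.mul_ofVertex]
    simp [hvert]
end

section
/- Let λ be a left weight on a countable directed graph G. If ρ₁ and ρ₂ are both canonical right companions to λ (right companions with ρᵢ(r(e), e) = λ(s(e), e) for every edge e), then ρ₁ = ρ₂. Hence the canonical right companion to λ is unique, and it equals ρ_α where α(v) = λ(s(v), v) is the path weight associated to λ. -/
open scoped Classical

/-- A canonical right companion of a left weight. -/
def IsCanonicalRightCompanion {V : Type u} [Quiver.{w + 1} V]
    (l r : PathIn V → PathIn V → ℝ) : Prop :=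
  IsRightCompanion l r ∧
  ∀ e : PathIn V, PathIn.IsEdge e →
    r (PathIn.ofVertex e.tgt) e = l (PathIn.ofVertex e.src) e


section Aux

variable {V : Type u} [Quiver.{w + 1} V]

namespace PathIn

lemma mul_of_comp (w v : PathIn V) (h : Comp w v) :
    mul w v = ⟨v.1, w.2.1, v.2.2.comp (w.2.2.cast h rfl)⟩ := dif_pos h

lemma src_mul_s9 (w v : PathIn V) (h : Comp w v) : (mul w v).src = v.src := by
  rw [mul_of_comp w v h]; rfl

lemma mul_vertex_right (v : PathIn V) (x : V) (h : v.src = x) :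
    mul v (ofVertex x) = v := by
  obtain ⟨a, b, p⟩ := v
  subst h
  have hcond : Comp (⟨a, b, p⟩ : PathIn V) (ofVertex a) := rfl
  show mul ⟨a, b, p⟩ (ofVertex a) = ⟨a, b, p⟩
  rw [mul_of_comp _ _ hcond]
  simp [ofVertex, Quiver.Path.cast_rfl_rfl]
  rfl

lemma mul_vertex_left (v : PathIn V) (x : V) (h : x = v.tgt) :
    mul (ofVertex x) v = v := by
  obtain ⟨a, b, p⟩ := v
  have h' : b = x := h.symm
  subst h'
  have hcond : Comp (ofVertex b) (⟨a, b, p⟩ : PathIn V) := rfl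
  rw [mul_of_comp _ _ hcond]
  simp [ofVertex, Quiver.Path.cast_rfl_rfl]
  rfl

lemma mul_assoc_core (a b c d : V) (pu : Quiver.Path a b) (pv : Quiver.Path b c)
    (pw : Quiver.Path c d) :
    mul (mul ⟨c, d, pw⟩ ⟨b, c, pv⟩) ⟨a, b, pu⟩ =
      mul (⟨c, d, pw⟩ : PathIn V) (mul ⟨b, c, pv⟩ ⟨a, b, pu⟩) := by
  have e1 : Comp (⟨c, d, pw⟩ : PathIn V) ⟨b, c, pv⟩ := rfl
  have e2 : Comp (⟨b, c, pv⟩ : PathIn V) ⟨a, b, pu⟩ := rfl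
  rw [mul_of_comp _ _ e1, mul_of_comp _ _ e2]
  have e3 : Comp (⟨b, d, pv.comp (pw.cast e1 rfl)⟩ : PathIn V) ⟨a, b, pu⟩ := rfl
  have e4 : Comp (⟨c, d, pw⟩ : PathIn V) ⟨a, c, pu.comp (pv.cast e2 rfl)⟩ := rfl
  rw [mul_of_comp _ _ e3, mul_of_comp _ _ e4]
  simp [Quiver.Path.cast_rfl_rfl, Quiver.Path.comp_assoc]
  rfl

lemma mul_assoc'_s9 (w v u : PathIn V) (h1 : Comp w v) (h2 : Comp v u) :
    mul (mul w v) u = mul w (mul v u) := by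
  obtain ⟨a, b, pu⟩ := u
  obtain ⟨b', c, pv⟩ := v
  obtain ⟨c', d, pw⟩ := w
  have hb : b' = b := h2
  have hc : c' = c := h1
  subst hb; subst hc
  exact mul_assoc_core _ _ _ _ pu pv pw

end PathIn

lemma pwOf_pos {l : PathIn V → PathIn V → ℝ} (hl : IsLeftWeight l) (v : PathIn V) :
    0 < pwOf l v :=
  (hl.2.1 _ _).2 rfl

lemma rw_vertex {r : PathIn V → PathIn V → ℝ} (hr : IsRightWeight r)
    (v : PathIn V) (x : V) (h : v.src = x) : r v (PathIn.ofVertex x) = 1 := by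
  have hc : PathIn.Comp v (PathIn.ofVertex x) := h
  have hpos : 0 < r v (PathIn.ofVertex x) := (hr.2.1 _ _).2 hc
  have hcc : PathIn.Comp (PathIn.ofVertex x) (PathIn.ofVertex x) := rfl
  have key := hr.2.2 v (PathIn.ofVertex x) (PathIn.ofVertex x) hc hcc
  rw [PathIn.mul_vertex_right (PathIn.ofVertex x) x rfl,
    PathIn.mul_vertex_right v x h] at key
  nlinarith

/-- The key edge identity. -/
lemma edge_key {l r : PathIn V → PathIn V → ℝ} (hl : IsLeftWeight l)
    (h : IsCanonicalRightCompanion l r) (e v : PathIn V) (he : e.IsEdge)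
    (hc : PathIn.Comp v e) :
    r v e * pwOf l v = pwOf l (PathIn.mul v e) := by
  have h1 : PathIn.Comp v (PathIn.ofVertex e.tgt) := hc
  have h2 : PathIn.Comp (PathIn.ofVertex e.tgt) e := rfl
  have hsq := h.1.2 v e (PathIn.ofVertex e.tgt) h1 h2
  rw [PathIn.mul_vertex_right v e.tgt hc, PathIn.mul_vertex_left e e.tgt rfl,
    h.2 e he] at hsq
  -- hsq : r v e * l (ofVertex e.tgt) v = l e v * l (ofVertex e.src) e
  have h3 : PathIn.Comp e (PathIn.ofVertex e.src) := rfl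
  have hlc := hl.2.2 (PathIn.ofVertex e.src) e v h3 hc
  rw [PathIn.mul_vertex_right e e.src rfl] at hlc
  have hsrc : (PathIn.mul v e).src = e.src := PathIn.src_mul_s9 v e hc
  have hvs : v.src = e.tgt := hc
  show r v e * l (PathIn.ofVertex v.src) v
      = l (PathIn.ofVertex (PathIn.mul v e).src) (PathIn.mul v e)
  rw [hsrc, hvs, hlc]
  exact hsq

lemma companion_eq {l r : PathIn V → PathIn V → ℝ} (hl : IsLeftWeight l)
    (h : IsCanonicalRightCompanion l r) : r = rightOf (pwOf l) := by
  have main : ∀ (a b : V) (p : Quiver.Path a b) (v : PathIn V), v.src = b →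
      r v ⟨a, b, p⟩ * pwOf l v = pwOf l (PathIn.mul v ⟨a, b, p⟩) := by
    intro a b p
    induction p with
    | nil =>
      intro v hv
      rw [show (⟨a, a, Quiver.Path.nil⟩ : PathIn V) = PathIn.ofVertex a from rfl,
        rw_vertex h.1.1 v a hv, PathIn.mul_vertex_right v a hv, one_mul]
    | cons p' e ih =>
      rename_i b0 c
      intro v hv
      set E : PathIn V := ⟨b0, c, e.toPath⟩ with hE
      set P : PathIn V := ⟨a, b0, p'⟩ with hP
      have hEP : PathIn.Comp E P := rfl
      have hdecomp : (⟨a, c, p'.cons e⟩ : PathIn V) = PathIn.mul E P := by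
        rw [PathIn.mul_of_comp E P hEP]
        simp [E, P, hE, hP, Quiver.Path.cast_rfl_rfl, Quiver.Hom.toPath]
        rfl
      have hvE : PathIn.Comp v E := hv
      have hvEP : PathIn.Comp (PathIn.mul v E) P := PathIn.src_mul_s9 v E hvE
      have hcoc := h.1.1.2.2 v E P hvE hEP
      have hEedge : E.IsEdge := by
        simp [E, PathIn.IsEdge, PathIn.length, hE, Quiver.Hom.toPath]
      have hedge := edge_key hl h E v hEedge hvE
      have hih := ih (PathIn.mul v E) hvEP
      rw [hdecomp, hcoc]
      calc r (PathIn.mul v E) P * r v E * pwOf l v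
          = r (PathIn.mul v E) P * pwOf l (PathIn.mul v E) := by
            rw [mul_assoc, hedge]
        _ = pwOf l (PathIn.mul (PathIn.mul v E) P) := hih
        _ = pwOf l (PathIn.mul v (PathIn.mul E P)) := by
            rw [PathIn.mul_assoc'_s9 v E P hvE hEP]
  funext v u
  by_cases hc : PathIn.Comp v u
  · have key := main u.1 u.2.1 u.2.2 v hc
    have hv := pwOf_pos hl v
    rw [rightOf, if_pos hc]
    rw [eq_div_iff (ne_of_gt hv)]
    exact key
  · rw [rightOf, if_neg hc]
    have h0 : ¬ 0 < r v u := fun hpos => hc ((h.1.1.2.1 v u).1 hpos)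
    exact le_antisymm (not_lt.1 h0) (h.1.1.1 v u)

end Aux

/-- the canonical right companion of a left weight is unique,
and equals `ρ_α` for the path weight `α(v) = λ(s(v),v)`. -/
theorem canonical_right_companion_unique {V : Type u} [Quiver.{w + 1} V] [Countable V] [∀ a b : V, Countable (a ⟶ b)]
    (l r₁ r₂ : PathIn V → PathIn V → ℝ) (hl : IsLeftWeight l)
    (h₁ : IsCanonicalRightCompanion l r₁) (h₂ : IsCanonicalRightCompanion l r₂) :
    r₁ = r₂ ∧ r₁ = rightOf (pwOf l) := by
  have e1 := companion_eq hl h₁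
  have e2 := companion_eq hl h₂
  exact ⟨e1.trans e2.symm, e1⟩
end

section
/- Let G be the directed graph with one vertex φ and two loop edges e, f, so G⁺ is the free monoid on {e,f}. Define the path weight α(v) = 2^{−|v|} if v ends in e (i.e. v ∈ G⁺e) and α(v) = 1 otherwise, and let ρ = ρ_α be the associated right weight, ρ(v,u) = α(vu)/α(v). Then G⁺_ρ := {u : sup_v ρ(v,u) < ∞} = {φ} ∪ G⁺e; in fact ρ(u) ≤ 1 for every u ∈ {φ} ∪ G⁺e, and ρ(u) = ∞ for every u ∈ G⁺f. -/
open scoped Classical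

/-- The free monoid on the two letters `e, f`, i.e. the path semigroupoid of
the single-vertex graph with two loop edges. -/
abbrev TwoGen : Type := FreeMonoid (Fin 2)

/-- The letter (loop edge) `e`. -/
def eGen : TwoGen := FreeMonoid.of 0

/-- The letter (loop edge) `f`. -/
def fGen : TwoGen := FreeMonoid.of 1

/-- The path weight `α(v) = 2^(-|v|)` if `v` ends in `e`, and `α(v) = 1`
otherwise. -/
noncomputable def alphaEnds (v : TwoGen) : ℝ :=
  if ∃ w : TwoGen, v = w * eGen then (2 : ℝ) ^ (-(FreeMonoid.length v : ℤ)) else 1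


lemma alpha_pos (v : TwoGen) : 0 < alphaEnds v := by
  unfold alphaEnds; split <;> positivity

lemma alpha_le_one (v : TwoGen) : alphaEnds v ≤ 1 := by
  unfold alphaEnds; split
  · exact zpow_le_one_of_nonpos₀ one_le_two (by simp)
  · exact le_rfl

lemma alpha_endsE {v : TwoGen} (h : ∃ w : TwoGen, v = w * eGen) :
    alphaEnds v = (2 : ℝ) ^ (-(FreeMonoid.length v : ℤ)) := if_pos h

lemma two_zpow_neg_le_alpha (v : TwoGen) :
    (2 : ℝ) ^ (-(FreeMonoid.length v : ℤ)) ≤ alphaEnds v := by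
  unfold alphaEnds; split
  · exact le_rfl
  · exact zpow_le_one_of_nonpos₀ one_le_two (by simp)

lemma not_endsE_f (x : TwoGen) : ¬ ∃ w : TwoGen, x * fGen = w * eGen := by
  rintro ⟨w, h⟩
  have h2 := congrArg (fun l : TwoGen => (FreeMonoid.toList l).getLast?) h
  simp only [FreeMonoid.toList_mul, eGen, fGen, FreeMonoid.toList_of,
    List.getLast?_concat] at h2
  exact absurd h2 (by decide)

lemma tri (u : TwoGen) :
    u = 1 ∨ (∃ w : TwoGen, u = w * eGen) ∨ (∃ w : TwoGen, u = w * fGen) := by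
  rcases List.eq_nil_or_concat (FreeMonoid.toList u) with h | ⟨l, a, h⟩
  · left
    exact FreeMonoid.toList.injective h
  · have hu : u = FreeMonoid.ofList l * FreeMonoid.of a :=
      FreeMonoid.toList.injective (by simpa using h)
    fin_cases a
    · exact Or.inr (Or.inl ⟨_, hu⟩)
    · exact Or.inr (Or.inr ⟨_, hu⟩)

lemma part1 (u : TwoGen) (hu : u = 1 ∨ ∃ w : TwoGen, u = w * eGen) (v : TwoGen) :
    alphaEnds (v * u) / alphaEnds v ≤ 1 := by
  rcases hu with rfl | ⟨w, rfl⟩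
  · rw [mul_one, div_self (alpha_pos v).ne']
  · rw [div_le_one (alpha_pos v)]
    have h1 : alphaEnds (v * (w * eGen)) =
        (2 : ℝ) ^ (-(FreeMonoid.length (v * (w * eGen)) : ℤ)) :=
      alpha_endsE ⟨v * w, by rw [mul_assoc]⟩
    rw [h1]
    refine le_trans ?_ (two_zpow_neg_le_alpha v)
    apply zpow_le_zpow_right₀ one_le_two
    simp only [FreeMonoid.length_mul, eGen, FreeMonoid.length_of]
    push_cast
    omega

lemma length_e_pow (n : ℕ) : FreeMonoid.length (eGen ^ n) = n := by
  induction n with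
  | zero => rw [pow_zero, FreeMonoid.length_one]
  | succ k ih => rw [pow_succ, FreeMonoid.length_mul, ih, eGen, FreeMonoid.length_of]

lemma part2 (u : TwoGen) (hu : ∃ w : TwoGen, u = w * fGen) :
    ¬ BddAbove (Set.range fun v => alphaEnds (v * u) / alphaEnds v) := by
  obtain ⟨w, rfl⟩ := hu
  rintro ⟨C, hC⟩
  obtain ⟨n, hn⟩ := pow_unbounded_of_one_lt C (one_lt_two (α := ℝ))
  have key : alphaEnds (eGen ^ (n + 1) * (w * fGen)) / alphaEnds (eGen ^ (n + 1))
      = 2 ^ (n + 1) := by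
    have h1 : alphaEnds (eGen ^ (n + 1) * (w * fGen)) = 1 := by
      unfold alphaEnds
      rw [if_neg]
      rw [← mul_assoc]
      exact not_endsE_f _
    have h2 : alphaEnds (eGen ^ (n + 1)) = (2 : ℝ) ^ (-((n + 1 : ℕ) : ℤ)) := by
      rw [alpha_endsE ⟨eGen ^ n, by rw [pow_succ]⟩, length_e_pow]
    rw [h1, h2, zpow_neg, one_div, inv_inv, zpow_natCast]
  have := hC (Set.mem_range_self (eGen ^ (n + 1)))
  rw [key] at this
  have h3 : (2 : ℝ) ^ n ≤ 2 ^ (n + 1) :=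
    pow_le_pow_right₀ one_le_two (Nat.le_succ n)
  linarith

/-- for the weight `alphaEnds` on the free monoid on `e, f`,
the associated right weight `ρ(v,u) = α(vu)/α(v)` satisfies `ρ(u) ≤ 1` for
`u ∈ {φ} ∪ G⁺e`, `ρ(u) = ∞` for `u ∈ G⁺f`, and `G⁺_ρ = {φ} ∪ G⁺e`. -/
theorem two_loops_ends_in_e_right_bounded :
    (∀ u : TwoGen, (u = 1 ∨ ∃ w : TwoGen, u = w * eGen) →
      ∀ v : TwoGen, alphaEnds (v * u) / alphaEnds v ≤ 1) ∧
    (∀ u : TwoGen, (∃ w : TwoGen, u = w * fGen) →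
      ¬ BddAbove (Set.range fun v => alphaEnds (v * u) / alphaEnds v)) ∧
    ({u : TwoGen | BddAbove (Set.range fun v => alphaEnds (v * u) / alphaEnds v)} =
      {1} ∪ {u : TwoGen | ∃ w : TwoGen, u = w * eGen}) := by
  refine ⟨part1, part2, ?_⟩
  ext u
  simp only [Set.mem_setOf_eq, Set.mem_union, Set.mem_singleton_iff]
  constructor
  · intro hb
    rcases tri u with h | h | h
    · exact Or.inl h
    · exact Or.inr h
    · exact absurd hb (part2 u h)
  · intro h
    exact ⟨1, by rintro x ⟨v, rfl⟩; exact part1 u h v⟩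
end

section
/- Let G⁺ be the free monoid on two generators e, f with identity φ, and define α: G⁺ → (0,∞) recursively by α(φ) = α(e) = α(f) = 1, α(ewe) = (1/2)α(we), α(fwf) = (1/2)α(wf), α(ewf) = α(wf), α(fwe) = α(we) for all words w. Then: (1) α(wv) ≤ α(v) for all words w, v, so the left weight λ_α(v,w) = α(wv)/α(v) satisfies λ_α(v,w) ≤ 1 for all v, w; (2) for every word w and every k ≥ 1, α(f^k w e)/α(f^k) = 2^{k−1} α(we), hence sup_v α(vu)/α(v) = ∞ for every nonempty word u (i.e. the canonical right companion ρ_α satisfies ρ_α(u) = ∞ for all u ≠ φ). -/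
open scoped Classical

/-- the recursively defined weight `α` on the free monoid on
`e, f` is left-bounded (`α(wv) ≤ α(v)`, so `λ_α ≤ 1`), yet
`α(f^k w e)/α(f^k) = 2^(k-1) α(we)` and `sup_v α(vu)/α(v) = ∞` for every
nonempty word `u`. -/
theorem two_loops_recursive_weight_unbounded_companion
    (α : TwoGen → ℝ) (hpos : ∀ v, 0 < α v)
    (h1 : α 1 = 1) (he : α eGen = 1) (hf : α fGen = 1)
    (hee : ∀ w : TwoGen, α (eGen * w * eGen) = (1 / 2) * α (w * eGen))
    (hff : ∀ w : TwoGen, α (fGen * w * fGen) = (1 / 2) * α (w * fGen))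
    (hef : ∀ w : TwoGen, α (eGen * w * fGen) = α (w * fGen))
    (hfe : ∀ w : TwoGen, α (fGen * w * eGen) = α (w * eGen)) :
    (∀ w v : TwoGen, α (w * v) ≤ α v) ∧
    (∀ w v : TwoGen, α (w * v) / α v ≤ 1) ∧
    (∀ (w : TwoGen) (k : ℕ), 1 ≤ k →
      α (fGen ^ k * w * eGen) / α (fGen ^ k) = 2 ^ (k - 1) * α (w * eGen)) ∧
    (∀ u : TwoGen, u ≠ 1 →
      ¬ BddAbove (Set.range fun v => α (v * u) / α v)) := by
  have concat_cases : ∀ v : TwoGen, v = 1 ∨ ∃ (w : TwoGen) (x : Fin 2),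
      v = w * FreeMonoid.of x := by
    intro v
    rcases List.eq_nil_or_concat (FreeMonoid.toList v) with h | ⟨l, a, h⟩
    · left; exact FreeMonoid.toList.injective h
    · right
      exact ⟨FreeMonoid.ofList l, a, FreeMonoid.toList.injective (by simpa using h)⟩
  have step : ∀ (x : Fin 2) (v : TwoGen), α (FreeMonoid.of x * v) ≤ α v := by
    intro x v
    rcases concat_cases v with rfl | ⟨w, y, rfl⟩
    · rcases (show x = 0 ∨ x = 1 by omega) with rfl | rfl
      · rw [mul_one, show FreeMonoid.of (0 : Fin 2) = eGen from rfl, he, h1]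
      · rw [mul_one, show FreeMonoid.of (1 : Fin 2) = fGen from rfl, hf, h1]
    · rw [← mul_assoc]
      rcases (show x = 0 ∨ x = 1 by omega) with rfl | rfl <;>
        rcases (show y = 0 ∨ y = 1 by omega) with rfl | rfl
      · rw [show FreeMonoid.of (0 : Fin 2) = eGen from rfl, hee]
        linarith [hpos (w * eGen)]
      · rw [show FreeMonoid.of (0 : Fin 2) = eGen from rfl,
          show FreeMonoid.of (1 : Fin 2) = fGen from rfl, hef]
      · rw [show FreeMonoid.of (0 : Fin 2) = eGen from rfl,
          show FreeMonoid.of (1 : Fin 2) = fGen from rfl, hfe]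
      · rw [show FreeMonoid.of (1 : Fin 2) = fGen from rfl, hff]
        linarith [hpos (w * fGen)]
  have part1 : ∀ w v : TwoGen, α (w * v) ≤ α v := by
    intro w
    induction w using FreeMonoid.recOn with
    | one => intro v; rw [one_mul]
    | of_mul x xs ih =>
      intro v
      rw [mul_assoc]
      exact (step x (xs * v)).trans (ih v)
  have part2 : ∀ w v : TwoGen, α (w * v) / α v ≤ 1 := fun w v =>
    (div_le_one (hpos v)).mpr (part1 w v)
  have hfk : ∀ k : ℕ, α (fGen ^ (k + 1)) = (1 / 2) ^ k := by
    intro k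
    induction k with
    | zero => simpa using hf
    | succ m ih =>
      have : fGen ^ (m + 2) = fGen * fGen ^ m * fGen := by
        rw [mul_assoc, ← pow_succ, ← pow_succ']
      rw [this, hff, ← pow_succ, ih]
      ring
  have hstrip : ∀ (k : ℕ) (w : TwoGen), α (fGen ^ k * w * eGen) = α (w * eGen) := by
    intro k
    induction k with
    | zero => intro w; rw [pow_zero, one_mul]
    | succ m ih =>
      intro w
      have : fGen ^ (m + 1) * w * eGen = fGen * (fGen ^ m * w) * eGen := by
        simp only [pow_succ', mul_assoc]
      rw [this, hfe, ih]
  have part3 : ∀ (w : TwoGen) (k : ℕ), 1 ≤ k →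
      α (fGen ^ k * w * eGen) / α (fGen ^ k) = 2 ^ (k - 1) * α (w * eGen) := by
    intro w k hk
    obtain ⟨m, rfl⟩ := Nat.exists_eq_add_of_le hk
    rw [Nat.add_comm 1 m, Nat.add_sub_cancel, hstrip, hfk, one_div, inv_pow,
      div_inv_eq_mul]
    ring
  have hek : ∀ k : ℕ, α (eGen ^ (k + 1)) = (1 / 2) ^ k := by
    intro k
    induction k with
    | zero => simpa using he
    | succ m ih =>
      have : eGen ^ (m + 2) = eGen * eGen ^ m * eGen := by
        rw [mul_assoc, ← pow_succ, ← pow_succ']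
      rw [this, hee, ← pow_succ, ih]
      ring
  have hstripE : ∀ (k : ℕ) (w : TwoGen), α (eGen ^ k * w * fGen) = α (w * fGen) := by
    intro k
    induction k with
    | zero => intro w; rw [pow_zero, one_mul]
    | succ m ih =>
      intro w
      have : eGen ^ (m + 1) * w * fGen = eGen * (eGen ^ m * w) * fGen := by
        simp only [pow_succ', mul_assoc]
      rw [this, hef, ih]
  refine ⟨part1, part2, part3, ?_⟩
  rintro u hu ⟨M, hM⟩
  rcases concat_cases u with rfl | ⟨w, y, rfl⟩
  · exact hu rfl
  have key : ∀ m : ℕ, 2 ^ m * α (w * FreeMonoid.of y) ≤ M := by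
    intro m
    rcases (show y = 0 ∨ y = 1 by omega) with rfl | rfl
    · have hmem : α (fGen ^ (m + 1) * (w * eGen)) / α (fGen ^ (m + 1)) ≤ M :=
        hM ⟨fGen ^ (m + 1), rfl⟩
      rw [← mul_assoc, part3 w (m + 1) (by omega)] at hmem
      exact (by simpa using hmem : (2 : ℝ) ^ m * α (w * eGen) ≤ M)
    · have hmem : α (eGen ^ (m + 1) * (w * fGen)) / α (eGen ^ (m + 1)) ≤ M :=
        hM ⟨eGen ^ (m + 1), rfl⟩
      rw [← mul_assoc, hstripE, hek, one_div, inv_pow] at hmem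
      rw [div_inv_eq_mul] at hmem
      show (2 : ℝ) ^ m * α (w * fGen) ≤ M
      linarith [hmem]
  obtain ⟨m, hm⟩ := pow_unbounded_of_one_lt (M / α (w * FreeMonoid.of y))
    (by norm_num : (1 : ℝ) < 2)
  have := (div_lt_iff₀ (hpos (w * FreeMonoid.of y))).mp hm
  linarith [key m]
end
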